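/- arXiv:1911.00259 — 4 statements merged into one kernel-verified Lean document; each statement's English description precedes it below -/
import Mathlib

section
/- Let C be an extriangulated category with weak kernels. Then the full subcategory eff C of effaceable finitely presented functors is a Serre subcategory of mod C: it is closed under subobjects, quotient objects, and extensions. -/
open CategoryTheory CategoryTheory.Limits Opposite

universe w' w v u

noncomputable section

namespace PaperStmt

variable {C : Type u} [Category.{v} C] [Preadditive C]

/-- The category of right `C`-modules (contravariant functors `C ⥤ Ab`). -/
abbrev Mod (C : Type u) [Category.{v} C] [Preadditive C] := Cᵒᵖ ⥤ AddCommGrpCat.{v}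

/-- A `C`-module `F` is finitely presented if it admits a presentation
`Hom(-,Y) ⟶ Hom(-,X) ⟶ F ⟶ 0`, expressed pointwise:  there are a morphism
`f : Y ⟶ X` and an epimorphism `p : Hom(-,X) ⟶ F` whose kernel is, at every
object `W`, exactly the set of morphisms factoring through `f`. -/
def IsFinitelyPresented (F : Mod C) : Prop :=
  ∃ (Y X : C) (f : Y ⟶ X) (p : preadditiveYoneda.obj X ⟶ F),
    (∀ W : Cᵒᵖ, Function.Surjective (p.app W)) ∧
    (∀ (W : C) (h : W ⟶ X), p.app (op W) h = 0 ↔ ∃ k : W ⟶ Y, k ≫ f = h)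

/-- `C` has weak kernels: every morphism admits a weak kernel. -/
def HasWeakKernels (C : Type u) [Category.{v} C] [Preadditive C] : Prop :=
  ∀ ⦃X Y : C⦄ (f : X ⟶ Y), ∃ (K : C) (g : K ⟶ X), g ≫ f = 0 ∧
    ∀ ⦃W : C⦄ (h : W ⟶ X), h ≫ f = 0 → ∃ t : W ⟶ K, t ≫ g = h

/-- An extriangulated category structure `(E, s)` on an additive category `C`
(Nakaoka–Palu).  The realization `s` is encoded by the relation
`Real δ g f`, meaning that the sequence `Z ⟶ Y ⟶ X` belongs to the
equivalence class `s(δ)`. -/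
structure Extriangulated (C : Type u) [Category.{v} C] [Preadditive C]
    [HasZeroObject C] [HasBinaryBiproducts C] where
  /-- the bifunctor of `E`-extensions -/
  E : Cᵒᵖ ⥤ C ⥤ AddCommGrpCat.{v}
  additive₁ : E.Additive
  additive₂ : ∀ X : Cᵒᵖ, (E.obj X).Additive
  /-- `Real δ g f` : the pair `(g, f)` realizes the extension `δ`. -/
  Real : ∀ ⦃X Z : C⦄, ((E.obj (op X)).obj Z) → ∀ ⦃Y : C⦄, (Z ⟶ Y) → (Y ⟶ X) → Prop
  /-- every extension is realized -/
  real_exists : ∀ ⦃X Z : C⦄ (δ : (E.obj (op X)).obj Z),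
    ∃ (Y : C) (g : Z ⟶ Y) (f : Y ⟶ X), Real δ g f
  /-- any two realizations of the same extension are equivalent -/
  real_unique : ∀ ⦃X Z : C⦄ (δ : (E.obj (op X)).obj Z) ⦃Y Y' : C⦄
    (g : Z ⟶ Y) (f : Y ⟶ X) (g' : Z ⟶ Y') (f' : Y' ⟶ X),
    Real δ g f → Real δ g' f' →
    ∃ i : Y ≅ Y', g ≫ i.hom = g' ∧ i.hom ≫ f' = f
  /-- the realization is closed under equivalence of sequences -/
  real_of_iso : ∀ ⦃X Z : C⦄ (δ : (E.obj (op X)).obj Z) ⦃Y Y' : C⦄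
    (g : Z ⟶ Y) (f : Y ⟶ X) (i : Y ≅ Y'),
    Real δ g f → Real δ (g ≫ i.hom) (i.inv ≫ f)
  /-- `s(0)` is the split sequence (additivity of `s`, part 1) -/
  real_zero : ∀ (X Z : C),
    Real (0 : (E.obj (op X)).obj Z) (biprod.inl : Z ⟶ Z ⊞ X) (biprod.snd : Z ⊞ X ⟶ X)
  /-- `s(δ ⊕ δ') = s(δ) ⊕ s(δ')` (additivity of `s`, part 2) -/
  real_add : ∀ ⦃X Z X' Z' : C⦄ (δ : (E.obj (op X)).obj Z) (δ' : (E.obj (op X')).obj Z')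
    ⦃Y Y' : C⦄ (g : Z ⟶ Y) (f : Y ⟶ X) (g' : Z' ⟶ Y') (f' : Y' ⟶ X'),
    Real δ g f → Real δ' g' f' →
    Real ((E.map (biprod.fst : X ⊞ X' ⟶ X).op).app _ ((E.obj (op X)).map (biprod.inl : Z ⟶ Z ⊞ Z') δ) +
          (E.map (biprod.snd : X ⊞ X' ⟶ X').op).app _ ((E.obj (op X')).map (biprod.inr : Z' ⟶ Z ⊞ Z') δ'))
      (biprod.map g g') (biprod.map f f')
  /-- realization of morphisms of extensions (condition `(∗)`) -/
  real_lift : ∀ ⦃X Z X' Z' : C⦄ (δ : (E.obj (op X)).obj Z) (δ' : (E.obj (op X')).obj Z')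
    ⦃Y Y' : C⦄ (g : Z ⟶ Y) (f : Y ⟶ X) (g' : Z' ⟶ Y') (f' : Y' ⟶ X')
    (z : Z ⟶ Z') (x : X ⟶ X'),
    Real δ g f → Real δ' g' f' →
    (E.obj (op X)).map z δ = (E.map x.op).app Z' δ' →
    ∃ y : Y ⟶ Y', g ≫ y = z ≫ g' ∧ y ≫ f' = f ≫ x
  /-- (ET3) -/
  et3 : ∀ ⦃X Z X' Z' : C⦄ (δ : (E.obj (op X)).obj Z) (δ' : (E.obj (op X')).obj Z')
    ⦃Y Y' : C⦄ (g : Z ⟶ Y) (f : Y ⟶ X) (g' : Z' ⟶ Y') (f' : Y' ⟶ X')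
    (z : Z ⟶ Z') (y : Y ⟶ Y'),
    Real δ g f → Real δ' g' f' → g ≫ y = z ≫ g' →
    ∃ x : X ⟶ X', y ≫ f' = f ≫ x ∧
      (E.obj (op X)).map z δ = (E.map x.op).app Z' δ'
  /-- (ET3)ᵒᵖ -/
  et3op : ∀ ⦃X Z X' Z' : C⦄ (δ : (E.obj (op X)).obj Z) (δ' : (E.obj (op X')).obj Z')
    ⦃Y Y' : C⦄ (g : Z ⟶ Y) (f : Y ⟶ X) (g' : Z' ⟶ Y') (f' : Y' ⟶ X')
    (y : Y ⟶ Y') (x : X ⟶ X'),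
    Real δ g f → Real δ' g' f' → y ≫ f' = f ≫ x →
    ∃ z : Z ⟶ Z', g ≫ y = z ≫ g' ∧
      (E.obj (op X)).map z δ = (E.map x.op).app Z' δ'
  /-- (ET4) -/
  et4 : ∀ ⦃X Z A : C⦄ ⦃Y B : C⦄
    (δ : (E.obj (op X)).obj Z) (δ' : (E.obj (op A)).obj Y)
    (g : Z ⟶ Y) (f : Y ⟶ X) (b : Y ⟶ B) (a : B ⟶ A),
    Real δ g f → Real δ' b a →
    ∃ (Cc : C) (f' : B ⟶ Cc) (b' : X ⟶ Cc) (a' : Cc ⟶ A)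
      (δ'' : (E.obj (op Cc)).obj Z),
      Real δ'' (g ≫ b) f' ∧
      f ≫ b' = b ≫ f' ∧ f' ≫ a' = a ∧
      Real ((E.obj (op A)).map f δ') b' a' ∧
      (E.map b'.op).app Z δ'' = δ ∧
      (E.obj (op Cc)).map g δ'' = (E.map a'.op).app Y δ'
  /-- (ET4)ᵒᵖ -/
  et4op : ∀ ⦃X Y Z A B : C⦄
    (δ : (E.obj (op Z)).obj X) (δ' : (E.obj (op Y)).obj A)
    (f : X ⟶ Y) (g : Y ⟶ Z) (m : A ⟶ B) (n : B ⟶ Y),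
    Real δ f g → Real δ' m n →
    ∃ (Cc : C) (f' : Cc ⟶ B) (b' : Cc ⟶ X) (a' : A ⟶ Cc)
      (δ'' : (E.obj (op Z)).obj Cc),
      Real δ'' f' (n ≫ g) ∧
      b' ≫ f = f' ≫ n ∧ a' ≫ f' = m ∧
      Real ((E.map f.op).app A δ') a' b' ∧
      (E.obj (op Z)).map b' δ'' = δ ∧
      (E.map g.op).app Cc δ'' = (E.obj (op Y)).map a' δ'

namespace Extriangulated

variable {C : Type u} [Category.{v} C] [Preadditive C]
  [HasZeroObject C] [HasBinaryBiproducts C] (ET : Extriangulated C)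

/-- `(g, f)` is a conflation. -/
def IsConflation ⦃Z Y X : C⦄ (g : Z ⟶ Y) (f : Y ⟶ X) : Prop :=
  ∃ δ : ((ET.E.obj (op X)).obj Z), ET.Real δ g f

/-- `f` is a deflation. -/
def IsDeflation ⦃Y X : C⦄ (f : Y ⟶ X) : Prop :=
  ∃ (Z : C) (g : Z ⟶ Y), ET.IsConflation g f

/-- `g` is an inflation. -/
def IsInflation ⦃Z Y : C⦄ (g : Z ⟶ Y) : Prop :=
  ∃ (X : C) (f : Y ⟶ X), ET.IsConflation g f

end Extriangulated


variable {C : Type u} [Category.{v} C] [Preadditive C]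
  [HasZeroObject C] [HasBinaryBiproducts C]

/-- A `C`-module `F` is effaceable if every element of `F` is killed by some
deflation. -/
def IsEffaceable (ET : Extriangulated C) (F : Mod C) : Prop :=
  ∀ (X : C) (x : F.obj (op X)), ∃ (Y : C) (α : Y ⟶ X),
    ET.IsDeflation α ∧ F.map α.op x = 0

/-- A `C`-module `F` is a defect if for some conflation `Z ⟶ Y ⟶ X` there is
an exact sequence `Hom(-,Z) ⟶ Hom(-,Y) ⟶ Hom(-,X) ⟶ F ⟶ 0`, i.e. `F` is the
cokernel of `Hom(-,Y) ⟶ Hom(-,X)` (expressed pointwise). -/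
def IsDefect (ET : Extriangulated C) (F : Mod C) : Prop :=
  ∃ (Z Y X : C) (g : Z ⟶ Y) (f : Y ⟶ X), ET.IsConflation g f ∧
    ∃ p : preadditiveYoneda.obj X ⟶ F,
      (∀ W : Cᵒᵖ, Function.Surjective (p.app W)) ∧
      (∀ (W : C) (h : W ⟶ X), p.app (op W) h = 0 ↔ ∃ k : W ⟶ Y, k ≫ f = h)

/-- A `C`-module `F` is left exact if it sends every conflation `Z ⟶ Y ⟶ X`
to an exact sequence `0 ⟶ F(X) ⟶ F(Y) ⟶ F(Z)`. -/
def IsLeftExact (ET : Extriangulated C) (F : Mod C) : Prop :=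
  ∀ ⦃Z Y X : C⦄ (g : Z ⟶ Y) (f : Y ⟶ X), ET.IsConflation g f →
    Function.Injective (F.map f.op) ∧
    ∀ y : F.obj (op Y), F.map g.op y = 0 ↔ ∃ x : F.obj (op X), F.map f.op x = y

/-!
Effaceability is a condition on single elements, and a natural transformation carries an element
killed by a deflation to an element killed by the same deflation. This gives closure under
subobjects (by injectivity) and quotients (by lifting elements). For an extension
`0 ⟶ F ⟶ G ⟶ H ⟶ 0` and `x ∈ G(X)`, a deflation `α` kills the image of `x` in `H`, so `G(α) x`
comes from `F`, where a further deflation `β` kills it; then `β ≫ α` kills `x`, and it is a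
deflation by (ET4)ᵒᵖ.
-/

lemma Extriangulated.IsDeflation.comp {ET : Extriangulated C} {B Y X : C} {β : B ⟶ Y}
    {α : Y ⟶ X} (hβ : ET.IsDeflation β) (hα : ET.IsDeflation α) :
    ET.IsDeflation (β ≫ α) := by
  obtain ⟨K, f, δ, hδ⟩ := hα
  obtain ⟨A, m, δ', hδ'⟩ := hβ
  obtain ⟨Cc, f', -, -, δ'', hconf, -⟩ := ET.et4op δ δ' f α m β hδ hδ'
  exact ⟨Cc, f', δ'', hconf⟩

namespace IsEffaceable

variable {ET : Extriangulated C} {F G H : Mod C}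

lemma of_injective (i : F ⟶ G) (hi : ∀ W, Function.Injective (i.app W))
    (hG : IsEffaceable ET G) : IsEffaceable ET F := by
  intro X x
  obtain ⟨Y, α, hα, hx⟩ := hG X (i.app (op X) x)
  refine ⟨Y, α, hα, hi (op Y) ?_⟩
  rw [NatTrans.naturality_apply, hx, map_zero]

lemma of_surjective (p : F ⟶ G) (hp : ∀ W, Function.Surjective (p.app W))
    (hF : IsEffaceable ET F) : IsEffaceable ET G := by
  intro X x
  obtain ⟨y, rfl⟩ := hp (op X) x
  obtain ⟨Y, α, hα, hy⟩ := hF X y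
  refine ⟨Y, α, hα, ?_⟩
  rw [← NatTrans.naturality_apply, hy, map_zero]

lemma of_exact (i : F ⟶ G) (p : G ⟶ H)
    (hexact : ∀ (W : Cᵒᵖ) (y : G.obj W), p.app W y = 0 ↔ ∃ x, i.app W x = y)
    (hF : IsEffaceable ET F) (hH : IsEffaceable ET H) : IsEffaceable ET G := by
  intro X x
  obtain ⟨Y, α, hα, hpx⟩ := hH X (p.app (op X) x)
  obtain ⟨x', hx'⟩ := (hexact (op Y) (G.map α.op x)).mp <| by
    rw [NatTrans.naturality_apply, hpx]
  obtain ⟨Y', β, hβ, hx'β⟩ := hF Y x'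
  refine ⟨Y', β ≫ α, hβ.comp hα, ?_⟩
  rw [op_comp, Functor.map_comp_apply, ← hx', ← NatTrans.naturality_apply, hx'β, map_zero]

end IsEffaceable

theorem effaceable_is_serre_general
    {C : Type u} [Category.{v} C] [Preadditive C] [HasZeroObject C]
    [HasBinaryBiproducts C] (ET : Extriangulated C) :
    (∀ (F G : Mod C), IsFinitelyPresented F → IsFinitelyPresented G →
      ∀ i : F ⟶ G, (∀ W, Function.Injective (i.app W)) →
        IsEffaceable ET G → IsEffaceable ET F) ∧
    (∀ (F G : Mod C), IsFinitelyPresented F → IsFinitelyPresented G →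
      ∀ p : F ⟶ G, (∀ W, Function.Surjective (p.app W)) →
        IsEffaceable ET F → IsEffaceable ET G) ∧
    (∀ (F G H : Mod C), IsFinitelyPresented F → IsFinitelyPresented G →
      IsFinitelyPresented H → ∀ (i : F ⟶ G) (p : G ⟶ H),
        (∀ W, Function.Injective (i.app W)) →
        (∀ W, Function.Surjective (p.app W)) →
        (∀ (W : Cᵒᵖ) (y : G.obj W), p.app W y = 0 ↔ ∃ x, i.app W x = y) →
        IsEffaceable ET F → IsEffaceable ET H → IsEffaceable ET G) :=
  ⟨fun _ _ _ _ i hi hG => hG.of_injective i hi,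
    fun _ _ _ _ p hp hF => hF.of_surjective p hp,
    fun _ _ _ _ _ _ i p _ _ hexact hF hH => IsEffaceable.of_exact i p hexact hF hH⟩

/-- For an extriangulated category with weak kernels, the effaceable
finitely presented functors form a Serre subcategory of `mod C`: they are
closed under subobjects, quotient objects, and extensions (exactness in
`mod C` being pointwise). -/
theorem effaceable_is_serre
    {C : Type u} [Category.{v} C] [Preadditive C] [HasZeroObject C]
    [HasBinaryBiproducts C] (ET : Extriangulated C) (hwk : HasWeakKernels C) :
    (∀ (F G : Mod C), IsFinitelyPresented F → IsFinitelyPresented G →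
      ∀ i : F ⟶ G, (∀ W, Function.Injective (i.app W)) →
        IsEffaceable ET G → IsEffaceable ET F) ∧
    (∀ (F G : Mod C), IsFinitelyPresented F → IsFinitelyPresented G →
      ∀ p : F ⟶ G, (∀ W, Function.Surjective (p.app W)) →
        IsEffaceable ET F → IsEffaceable ET G) ∧
    (∀ (F G H : Mod C), IsFinitelyPresented F → IsFinitelyPresented G →
      IsFinitelyPresented H → ∀ (i : F ⟶ G) (p : G ⟶ H),
        (∀ W, Function.Injective (i.app W)) →
        (∀ W, Function.Surjective (p.app W)) →
        (∀ (W : Cᵒᵖ) (y : G.obj W), p.app W y = 0 ↔ ∃ x, i.app W x = y) →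
        IsEffaceable ET F → IsEffaceable ET H → IsEffaceable ET G) :=
  effaceable_is_serre_general ET

end PaperStmt

end
end

section
/- Let C be an extriangulated category with weak kernels. Then the full subcategory def C of defects in mod C is closed under taking kernels and cokernels of morphisms in mod C. -/
/-!
Present the defects as `F = coker Hom(-, f)` and `G = coker Hom(-, f')` with deflations
`f : Y ⟶ X` and `f' : Y' ⟶ X'`; by the Yoneda lemma `α` is induced by some `x : X ⟶ X'`.
Everything rests on one fact: `h : W ⟶ X` factors through the deflation of a conflation `δ`
iff `h^* δ = 0`.

The cokernel of `α` is `coker Hom(-, [x f'])`, and `[x f'] : X ⊞ Y' ⟶ X'` is a deflation: it is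
`1 ⊕ f'` followed by the split deflation `[x 1]`.  For the kernel, realize `x^* δ'` by
`Z' ⟶ Q ⟶ X` with deflation `q`: then `h` factors through `q` iff `h ≫ x` factors through `f'`,
so `ker α` is the image of `Hom(-, Q)`.  Realizing `q^* δ` by a deflation `r : R ⟶ Q` in the same
way identifies this image with `coker Hom(-, r)`.
-/

open CategoryTheory CategoryTheory.Limits Opposite

universe w' w v u

noncomputable section

namespace PaperStmt

namespace Extriangulated

variable {C : Type u} [Category.{v} C] [Preadditive C]
  [HasZeroObject C] [HasBinaryBiproducts C] (ET : Extriangulated C)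

open ZeroObject

lemma real_zero_id (W : C) :
    ET.Real (0 : (ET.E.obj (op W)).obj 0) (0 : (0 : C) ⟶ W) (𝟙 W) := by
  have h := ET.real_of_iso _ _ _ (isoZeroBiprod (isZero_zero C)).symm (ET.real_zero W 0)
  rwa [(isZero_zero C).eq_of_src (biprod.inl ≫ _) 0, Iso.symm_inv, isoZeroBiprod_hom,
    biprod.inr_snd] at h

lemma pullback_deflation_eq_zero {X Y Z : C} {δ : (ET.E.obj (op X)).obj Z} {g : Z ⟶ Y}
    {f : Y ⟶ X} (hr : ET.Real δ g f) : (ET.E.map f.op).app Z δ = 0 := by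
  obtain ⟨z, -, hz⟩ := ET.et3op 0 δ 0 (𝟙 Y) g f (𝟙 Y) f (ET.real_zero_id Y) hr (by simp)
  rw [← hz, map_zero]

lemma factors_iff_pullback_eq_zero {X Y Z W : C} {δ : (ET.E.obj (op X)).obj Z} {g : Z ⟶ Y}
    {f : Y ⟶ X} (hr : ET.Real δ g f) (h : W ⟶ X) :
    (∃ k : W ⟶ Y, k ≫ f = h) ↔ (ET.E.map h.op).app Z δ = 0 := by
  constructor
  · rintro ⟨k, rfl⟩
    rw [op_comp, ET.E.map_comp, NatTrans.comp_app, ConcreteCategory.comp_apply,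
      ET.pullback_deflation_eq_zero hr, map_zero]
  · intro hz
    obtain ⟨y, -, hy⟩ := ET.real_lift 0 δ biprod.inl biprod.snd g f (𝟙 Z) h (ET.real_zero W Z) hr
      (by rw [hz, map_zero])
    exact ⟨biprod.inr ≫ y, by rw [Category.assoc, hy, biprod.inr_snd_assoc]⟩

lemma factors_iff_of_real_pullback {X Y Z X' Y' W : C} {δ : (ET.E.obj (op X)).obj Z}
    {g : Z ⟶ Y} {f : Y ⟶ X} (hr : ET.Real δ g f) (x : X' ⟶ X) {g' : Z ⟶ Y'} {f' : Y' ⟶ X'}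
    (hr' : ET.Real ((ET.E.map x.op).app Z δ) g' f') (h : W ⟶ X') :
    (∃ t : W ⟶ Y', t ≫ f' = h) ↔ ∃ k : W ⟶ Y, k ≫ f = h ≫ x := by
  rw [ET.factors_iff_pullback_eq_zero hr', ET.factors_iff_pullback_eq_zero hr, op_comp,
    ET.E.map_comp]
  rfl

lemma isDeflation_id (X : C) : ET.IsDeflation (𝟙 X) :=
  ⟨0, 0, 0, ET.real_zero_id X⟩

lemma isDeflation_biprod_snd (Z X : C) : ET.IsDeflation (biprod.snd : Z ⊞ X ⟶ X) :=
  ⟨Z, biprod.inl, 0, ET.real_zero X Z⟩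

variable {ET}

lemma IsDeflation.iso_hom_comp {Y Y' X : C} (e : Y' ≅ Y) {f : Y ⟶ X} (hf : ET.IsDeflation f) :
    ET.IsDeflation (e.hom ≫ f) := by
  obtain ⟨Z, g, δ, hr⟩ := hf
  exact ⟨Z, g ≫ e.inv, δ, by simpa using ET.real_of_iso δ g f e.symm hr⟩

lemma IsDeflation.comp_s7 {B Y X : C} {n : B ⟶ Y} {f : Y ⟶ X} (hn : ET.IsDeflation n)
    (hf : ET.IsDeflation f) : ET.IsDeflation (n ≫ f) := by
  obtain ⟨A, m, δ', hm⟩ := hn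
  obtain ⟨Z, g, δ, hg⟩ := hf
  obtain ⟨K, k, -, -, δ'', hk, -⟩ := ET.et4op δ δ' g f m n hg hm
  exact ⟨K, k, δ'', hk⟩

lemma IsDeflation.biprod_map {Y X Y' X' : C} {f : Y ⟶ X} {f' : Y' ⟶ X'}
    (hf : ET.IsDeflation f) (hf' : ET.IsDeflation f') : ET.IsDeflation (biprod.map f f') := by
  obtain ⟨Z, g, δ, hg⟩ := hf
  obtain ⟨Z', g', δ', hg'⟩ := hf'
  exact ⟨Z ⊞ Z', biprod.map g g', _, ET.real_add δ δ' g f g' f' hg hg'⟩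

lemma IsDeflation.biprod_desc {X Y' X' : C} (x : X ⟶ X') {f' : Y' ⟶ X'}
    (hf' : ET.IsDeflation f') : ET.IsDeflation (biprod.desc x f') := by
  have e : biprod.desc x f' =
      biprod.map (𝟙 X) f' ≫ (Biprod.unipotentUpper x).hom ≫ biprod.snd := by
    ext <;> simp
  rw [e]
  exact ((ET.isDeflation_id X).biprod_map hf').comp_s7
    ((ET.isDeflation_biprod_snd X X').iso_hom_comp _)

end Extriangulated

section Presentation

variable {C : Type u} [Category.{v} C] [Preadditive C]

/-- `p` exhibits `F` as the cokernel of `preadditiveYoneda.map f`, computed pointwise. -/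
structure IsYonedaPresentation {F : Mod C} {Y X : C} (p : preadditiveYoneda.obj X ⟶ F)
    (f : Y ⟶ X) : Prop where
  surjective (W : Cᵒᵖ) : Function.Surjective (p.app W)
  app_eq_zero_iff (W : C) (h : W ⟶ X) : p.app (op W) h = 0 ↔ ∃ k : W ⟶ Y, k ≫ f = h

lemma exists_isYonedaPresentation {Y X : C} (f : Y ⟶ X) :
    ∃ (F : Mod C) (p : preadditiveYoneda.obj X ⟶ F), IsYonedaPresentation p f := by
  let S := ShortComplex.mk (preadditiveYoneda.map f) (cokernel.π (preadditiveYoneda.map f))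
    (cokernel.condition _)
  have hS : S.Exact := S.exact_of_g_is_cokernel (cokernelIsCokernel _)
  refine ⟨cokernel (preadditiveYoneda.map f), cokernel.π _,
    fun W => (AddCommGrpCat.epi_iff_surjective _).1 inferInstance, fun W h => ⟨fun h0 => ?_, ?_⟩⟩
  · exact (ShortComplex.ab_exact_iff _).1
      (hS.map ((evaluation Cᵒᵖ AddCommGrpCat).obj (op W))) h h0
  · rintro ⟨k, rfl⟩
    exact congrArg (fun φ => φ.app (op W) k) (cokernel.condition (preadditiveYoneda.map f))

lemma preadditiveYoneda_app_eq {F : Mod C} {X W : C} (η : preadditiveYoneda.obj X ⟶ F)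
    (h : W ⟶ X) : η.app (op W) h = F.map h.op (η.app (op X) (𝟙 X)) :=
  (congrArg (η.app (op W)) (Category.comp_id h).symm).trans
    (NatTrans.naturality_apply η h.op (𝟙 X))

lemma exists_app_eq_app_comp {G : Mod C} {X X' : C} (η : preadditiveYoneda.obj X ⟶ G)
    {p' : preadditiveYoneda.obj X' ⟶ G} (hp' : Function.Surjective (p'.app (op X))) :
    ∃ x : X ⟶ X', ∀ (W : C) (h : W ⟶ X), η.app (op W) h = p'.app (op W) (h ≫ x) := by
  obtain ⟨x, hx⟩ := hp' (η.app (op X) (𝟙 X))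
  refine ⟨x, fun W h => ?_⟩
  rw [preadditiveYoneda_app_eq η, ← hx]
  exact (NatTrans.naturality_apply p' h.op x).symm

namespace IsYonedaPresentation

variable {F H : Mod C} {Y X : C} {p : preadditiveYoneda.obj X ⟶ F} {f : Y ⟶ X}

lemma app_add_comp (hp : IsYonedaPresentation p f) {W : C} (h : W ⟶ X) (k : W ⟶ Y) :
    p.app (op W) (h + k ≫ f) = p.app (op W) h := by
  have hk : p.app (op W) (k ≫ f) = 0 := (hp.app_eq_zero_iff W _).2 ⟨k, rfl⟩
  calc p.app (op W) (h + k ≫ f) = p.app (op W) h + p.app (op W) (k ≫ f) :=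
        map_add (p.app (op W)).hom h (k ≫ f)
    _ = p.app (op W) h := by rw [hk, add_zero]

lemma exists_desc (hp : IsYonedaPresentation p f) (φ : preadditiveYoneda.obj X ⟶ H)
    (hφ : ∀ (W : C) (k : W ⟶ Y), φ.app (op W) (k ≫ f) = 0) :
    ∃ ψ : F ⟶ H, ∀ (W : C) (h : W ⟶ X), ψ.app (op W) (p.app (op W) h) = φ.app (op W) h := by
  have ker_le (W : Cᵒᵖ) : (p.app W).hom.ker ≤ (φ.app W).hom.ker := fun h h0 => by
    obtain ⟨k, rfl⟩ := (hp.app_eq_zero_iff (unop W) h).1 h0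
    exact hφ (unop W) k
  let ψ (W : Cᵒᵖ) : F.obj W ⟶ H.obj W := AddCommGrpCat.ofHom
    ((p.app W).hom.liftOfSurjective (hp.surjective W) ⟨(φ.app W).hom, ker_le W⟩)
  have hψ (W : Cᵒᵖ) (h : unop W ⟶ X) : ψ W (p.app W h) = φ.app W h :=
    AddMonoidHom.liftOfRightInverse_comp_apply _ _ _ _ h
  refine ⟨⟨ψ, fun W W' u => ?_⟩, fun W => hψ (op W)⟩
  ext a
  obtain ⟨h, rfl⟩ := hp.surjective W a
  simp only [ConcreteCategory.comp_apply]
  rw [← NatTrans.naturality_apply]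
  exact (hψ W' _).trans ((NatTrans.naturality_apply φ u h).trans (congrArg _ (hψ W h).symm))

lemma exists_kernel {G : Mod C} (hp : IsYonedaPresentation p f) (α : F ⟶ G) {Q R : C}
    (q : Q ⟶ X)
    (hq : ∀ (W : C) (h : W ⟶ X), α.app (op W) (p.app (op W) h) = 0 ↔ ∃ t : W ⟶ Q, t ≫ q = h)
    (r : R ⟶ Q)
    (hr : ∀ (W : C) (t : W ⟶ Q), (∃ s : W ⟶ R, s ≫ r = t) ↔ ∃ k : W ⟶ Y, k ≫ f = t ≫ q)
    {π : preadditiveYoneda.obj Q ⟶ H} (hπ : IsYonedaPresentation π r) :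
    ∃ κ : H ⟶ F, (∀ W, Function.Injective (κ.app W)) ∧
      ∀ (W : Cᵒᵖ) (a : F.obj W), α.app W a = 0 ↔ ∃ c, κ.app W c = a := by
  obtain ⟨κ, hκ⟩ := hπ.exists_desc (preadditiveYoneda.map q ≫ p) fun W s =>
    (hp.app_eq_zero_iff W _).2 ((hr W (s ≫ r)).1 ⟨s, rfl⟩)
  replace hκ (W : C) (t : W ⟶ Q) : κ.app (op W) (π.app (op W) t) = p.app (op W) (t ≫ q) :=
    hκ W t
  refine ⟨κ, fun W => ?_, fun W a => ?_⟩ <;> rcases W with ⟨W⟩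
  · rw [injective_iff_map_eq_zero]
    intro c hc
    obtain ⟨t, rfl⟩ : ∃ t : W ⟶ Q, π.app (op W) t = c := hπ.surjective _ c
    rw [hκ] at hc
    exact (hπ.app_eq_zero_iff W t).2 ((hr W t).2 ((hp.app_eq_zero_iff W _).1 hc))
  · obtain ⟨h, rfl⟩ : ∃ h : W ⟶ X, p.app (op W) h = a := hp.surjective _ a
    constructor
    · intro h0
      obtain ⟨t, rfl⟩ := (hq W h).1 h0
      exact ⟨π.app _ t, hκ W t⟩
    · rintro ⟨c, hc⟩
      obtain ⟨t, rfl⟩ : ∃ t : W ⟶ Q, π.app (op W) t = c := hπ.surjective _ c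
      rw [← hc, hκ]
      exact (hq W _).2 ⟨t, rfl⟩

end IsYonedaPresentation

lemma IsYonedaPresentation.exists_cokernel [HasBinaryBiproducts C] {F G H : Mod C}
    {X X' Y' : C} {p : preadditiveYoneda.obj X ⟶ F} {p' : preadditiveYoneda.obj X' ⟶ G}
    {f' : Y' ⟶ X'} (hp' : IsYonedaPresentation p' f') (hp : ∀ W, Function.Surjective (p.app W))
    (α : F ⟶ G) (x : X ⟶ X')
    (hx : ∀ (W : C) (h : W ⟶ X), α.app (op W) (p.app (op W) h) = p'.app (op W) (h ≫ x))
    {π : preadditiveYoneda.obj X' ⟶ H} (hπ : IsYonedaPresentation π (biprod.desc x f')) :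
    ∃ ρ : G ⟶ H, (∀ W, Function.Surjective (ρ.app W)) ∧
      ∀ (W : Cᵒᵖ) (b : G.obj W), ρ.app W b = 0 ↔ ∃ a, α.app W a = b := by
  obtain ⟨ρ, hρ⟩ := hp'.exists_desc π fun W k =>
    (hπ.app_eq_zero_iff W _).2 ⟨k ≫ biprod.inr, by simp⟩
  refine ⟨ρ, fun W c => ?_, fun W b => ?_⟩ <;> rcases W with ⟨W⟩
  · obtain ⟨h, rfl⟩ : ∃ h : W ⟶ X', π.app (op W) h = c := hπ.surjective _ c
    exact ⟨p'.app _ h, hρ W h⟩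
  constructor
  · intro hb
    obtain ⟨h, rfl⟩ : ∃ h : W ⟶ X', p'.app (op W) h = b := hp'.surjective _ b
    rw [hρ] at hb
    obtain ⟨k, rfl⟩ := (hπ.app_eq_zero_iff W h).1 hb
    refine ⟨p.app _ (k ≫ biprod.fst), ?_⟩
    have hk : k ≫ biprod.desc x f' = (k ≫ biprod.fst) ≫ x + (k ≫ biprod.snd) ≫ f' := by
      simp [biprod.desc_eq]
    rw [hx, hk, hp'.app_add_comp]
  · rintro ⟨a, rfl⟩
    obtain ⟨h, rfl⟩ : ∃ h : W ⟶ X, p.app (op W) h = a := hp _ a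
    rw [hx, hρ]
    exact (hπ.app_eq_zero_iff W _).2 ⟨h ≫ biprod.inl, by simp⟩

lemma IsYonedaPresentation.isDefect [HasZeroObject C] [HasBinaryBiproducts C]
    {ET : Extriangulated C} {F : Mod C} {Z Y X : C} {g : Z ⟶ Y} {f : Y ⟶ X}
    {p : preadditiveYoneda.obj X ⟶ F} (hp : IsYonedaPresentation p f) (hc : ET.IsConflation g f) :
    IsDefect ET F :=
  ⟨Z, Y, X, g, f, hc, p, hp.surjective, hp.app_eq_zero_iff⟩

end Presentation

theorem defect_closed_under_kernels_cokernels_general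
    {C : Type u} [Category.{v} C] [Preadditive C] [HasZeroObject C]
    [HasBinaryBiproducts C] (ET : Extriangulated C)
    (F G : Mod C) (hF : IsDefect ET F) (hG : IsDefect ET G) (α : F ⟶ G) :
    (∃ (K : Mod C) (κ : K ⟶ F), IsDefect ET K ∧
      (∀ W, Function.Injective (κ.app W)) ∧
      (∀ (W : Cᵒᵖ) (x : F.obj W), α.app W x = 0 ↔ ∃ k, κ.app W k = x)) ∧
    (∃ (Q : Mod C) (π : G ⟶ Q), IsDefect ET Q ∧
      (∀ W, Function.Surjective (π.app W)) ∧
      (∀ (W : Cᵒᵖ) (y : G.obj W), π.app W y = 0 ↔ ∃ x, α.app W x = y)) := by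
  obtain ⟨Z, Y, X, g, f, ⟨δ, hδ⟩, p, hps, hpk⟩ := hF
  obtain ⟨Z', Y', X', g', f', ⟨δ', hδ'⟩, p', hps', hpk'⟩ := hG
  have hp : IsYonedaPresentation p f := ⟨hps, hpk⟩
  have hp' : IsYonedaPresentation p' f' := ⟨hps', hpk'⟩
  obtain ⟨x, hx⟩ := exists_app_eq_app_comp (p ≫ α) (hps' (op X))
  replace hx (W : C) (h : W ⟶ X) : α.app (op W) (p.app (op W) h) = p'.app (op W) (h ≫ x) :=
    hx W h
  obtain ⟨Q, g₁, q, hq⟩ := ET.real_exists ((ET.E.map x.op).app Z' δ')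
  obtain ⟨R, g₂, r, hr⟩ := ET.real_exists ((ET.E.map q.op).app Z δ)
  obtain ⟨K, πK, hπK⟩ := exists_isYonedaPresentation r
  obtain ⟨N, πN, hπN⟩ := exists_isYonedaPresentation (biprod.desc x f')
  obtain ⟨M, n, hn⟩ := Extriangulated.IsDeflation.biprod_desc x ⟨Z', g', δ', hδ'⟩
  constructor
  · obtain ⟨κ, hκ, hker⟩ := hp.exists_kernel α q
      (fun W h => by rw [hx, hp'.app_eq_zero_iff, ET.factors_iff_of_real_pullback hδ' x hq])
      r (fun W t => ET.factors_iff_of_real_pullback hδ q hr t) hπK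
    exact ⟨K, κ, hπK.isDefect ⟨_, hr⟩, hκ, hker⟩
  · obtain ⟨ρ, hρ, hcoker⟩ := hp'.exists_cokernel hps α x hx hπN
    exact ⟨N, ρ, hπN.isDefect hn, hρ, hcoker⟩

/-- For an extriangulated category with weak kernels, the subcategory of
defects is closed under taking kernels and cokernels of morphisms in
`mod C` (kernels and cokernels being computed pointwise). -/
theorem defect_closed_under_kernels_cokernels
    {C : Type u} [Category.{v} C] [Preadditive C] [HasZeroObject C]
    [HasBinaryBiproducts C] (ET : Extriangulated C) (hwk : HasWeakKernels C)
    (F G : Mod C) (hF : IsDefect ET F) (hG : IsDefect ET G) (α : F ⟶ G) :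
    (∃ (K : Mod C) (κ : K ⟶ F), IsDefect ET K ∧
      (∀ W, Function.Injective (κ.app W)) ∧
      (∀ (W : Cᵒᵖ) (x : F.obj W), α.app W x = 0 ↔ ∃ k, κ.app W k = x)) ∧
    (∃ (Q : Mod C) (π : G ⟶ Q), IsDefect ET Q ∧
      (∀ W, Function.Surjective (π.app W)) ∧
      (∀ (W : Cᵒᵖ) (y : G.obj W), π.app W y = 0 ↔ ∃ x, α.app W x = y)) :=
  defect_closed_under_kernels_cokernels_general ET F G hF hG α

end PaperStmt

end
end

section
/- Let C be an extriangulated category with weak kernels and F ∈ mod C. Then F sends every deflation of C to a monomorphism of abelian groups if and only if Hom(S, F) = 0 for every defect S ∈ def C. -/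
/-! By Yoneda, a morphism `Hom(-, X) ⟶ F` is the same as an element `x ∈ F(X)` (additivity of
`F`, which is inherited from its finite presentation, makes `h ↦ F(h) x` a morphism). The defect
of a deflation `f : Y ⟶ X` is the cokernel of `Hom(-, f)`, so morphisms from it to `F` are the
`x ∈ F(X)` with `F(f) x = 0`; all of them vanish exactly when `F(f)` is injective. -/

open CategoryTheory CategoryTheory.Limits Opposite

universe w' w v u

noncomputable section

namespace PaperStmt

section PointwiseCokernel

variable {D : Type*} [Category D] {G H : D ⥤ AddCommGrpCat.{w}} (φ : G ⟶ H)

def pointwiseCokernel : D ⥤ AddCommGrpCat.{w} where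
  obj W := AddCommGrpCat.of (H.obj W ⧸ (φ.app W).hom.range)
  map u := AddCommGrpCat.ofHom <| QuotientAddGroup.map _ _ (H.map u).hom <| by
    rintro _ ⟨y, rfl⟩
    exact ⟨G.map u y, NatTrans.naturality_apply φ u y⟩
  map_id W := by
    ext y
    simp
  map_comp u v := by
    ext y
    simp

namespace pointwiseCokernel

def π : H ⟶ pointwiseCokernel φ where
  app W := AddCommGrpCat.ofHom (QuotientAddGroup.mk' _)

lemma π_app_surjective (W : D) : Function.Surjective ((π φ).app W) :=
  QuotientAddGroup.mk'_surjective _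

lemma π_app_eq_zero_iff (W : D) (y : H.obj W) :
    (π φ).app W y = 0 ↔ ∃ x, φ.app W x = y :=
  QuotientAddGroup.eq_zero_iff y

variable {F : D ⥤ AddCommGrpCat.{w}} (ψ : H ⟶ F) (hψ : φ ≫ ψ = 0)

def desc : pointwiseCokernel φ ⟶ F where
  app W := AddCommGrpCat.ofHom <| QuotientAddGroup.lift _ (ψ.app W).hom <| by
    rintro _ ⟨x, rfl⟩
    simpa using congrArg (fun τ => τ.app W x) hψ
  naturality W W' u := by
    ext y
    induction y using QuotientAddGroup.induction_on
    exact NatTrans.naturality_apply ψ u _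

@[simp]
lemma π_desc : π φ ≫ desc φ ψ hψ = ψ := rfl

end pointwiseCokernel

end PointwiseCokernel

lemma additive_of_surjective_app {D : Type*} [Category D] [Preadditive D]
    {G F : D ⥤ AddCommGrpCat.{w}} [G.Additive] (p : G ⟶ F)
    (hp : ∀ W, Function.Surjective (p.app W)) : F.Additive where
  map_add {W W' a b} := by
    ext y
    obtain ⟨z, rfl⟩ := hp W y
    simp only [AddCommGrpCat.hom_add_apply, ← NatTrans.naturality_apply, G.map_add, map_add]

lemma IsFinitelyPresented.additive {C : Type u} [Category.{v} C] [Preadditive C] {F : Mod C}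
    (hF : IsFinitelyPresented F) : F.Additive := by
  obtain ⟨_, _, _, p, hp, -⟩ := hF
  exact additive_of_surjective_app p hp

section Yoneda

variable {C : Type u} [Category.{v} C] [Preadditive C] {F : Cᵒᵖ ⥤ AddCommGrpCat.{v}} {X : C}

lemma app_eq_map_app_id (q : preadditiveYoneda.obj X ⟶ F) {W : C} (h : W ⟶ X) :
    q.app (op W) h = F.map h.op (q.app (op X) (𝟙 X)) := by
  have := NatTrans.naturality_apply q h.op (𝟙 X)
  rwa [show (preadditiveYoneda.obj X).map h.op (𝟙 X) = h from Category.comp_id h] at this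

lemma eq_zero_of_app_id_eq_zero (q : preadditiveYoneda.obj X ⟶ F)
    (hq : q.app (op X) (𝟙 X) = 0) : q = 0 := by
  ext W h
  rw [app_eq_map_app_id q h, hq, map_zero]
  rfl

def homOfElement [F.Additive] (x : F.obj (op X)) : preadditiveYoneda.obj X ⟶ F where
  app W := AddCommGrpCat.ofHom <| AddMonoidHom.mk' (fun h : W.unop ⟶ X => F.map h.op x)
    fun a b => congrArg (fun φ : F.obj (op X) ⟶ F.obj W => φ x) (F.map_add (f := a.op) (g := b.op))
  naturality W W' u := by
    ext h
    exact congrArg (fun φ : F.obj (op X) ⟶ F.obj W' => φ x) (F.map_comp h.op u)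

@[simp]
lemma homOfElement_app [F.Additive] (x : F.obj (op X)) {W : C} (h : W ⟶ X) :
    (homOfElement x).app (op W) h = F.map h.op x := rfl

end Yoneda

section Defect

variable {C : Type u} [Category.{v} C] [Preadditive C] {F : Cᵒᵖ ⥤ AddCommGrpCat.{v}}
  {Y X : C} (f : Y ⟶ X)

lemma hom_eq_zero_of_map_injective {S : Cᵒᵖ ⥤ AddCommGrpCat.{v}} (p : preadditiveYoneda.obj X ⟶ S)
    (hp : ∀ W, Function.Surjective (p.app W)) (hpf : p.app (op Y) f = 0)
    (hf : Function.Injective (F.map f.op)) (α : S ⟶ F) : α = 0 := by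
  have : ∀ W, Epi (p.app W) := fun W => (AddCommGrpCat.epi_iff_surjective _).2 (hp W)
  have := NatTrans.epi_of_epi_app p
  refine (cancel_epi p).1 (Eq.trans ?_ comp_zero.symm)
  refine eq_zero_of_app_id_eq_zero _ (hf ?_)
  rw [← app_eq_map_app_id, map_zero]
  exact (congrArg (α.app (op Y)) hpf).trans (map_zero _)

lemma map_injective_of_forall_hom_eq_zero [F.Additive]
    (hzero : ∀ α : pointwiseCokernel (preadditiveYoneda.map f) ⟶ F, α = 0) :
    Function.Injective (F.map f.op) := by
  refine (injective_iff_map_eq_zero _).2 fun x hx => ?_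
  have hdesc : preadditiveYoneda.map f ≫ homOfElement x = 0 := by
    refine NatTrans.ext (funext fun W => AddCommGrpCat.ext fun (k : W.unop ⟶ Y) => ?_)
    change F.map (k ≫ f).op x = 0
    rw [op_comp, F.map_comp, ConcreteCategory.comp_apply, hx, map_zero]
  calc x = (homOfElement x).app (op X) (𝟙 X) := by simp
    _ = (pointwiseCokernel.π _ ≫ pointwiseCokernel.desc _ _ hdesc).app (op X) (𝟙 X) := by
      rw [pointwiseCokernel.π_desc]
    _ = 0 := by rw [hzero (pointwiseCokernel.desc _ _ hdesc), comp_zero]; rfl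

lemma isDefect_pointwiseCokernel [HasZeroObject C] [HasBinaryBiproducts C]
    {ET : Extriangulated C} {Z : C} {g : Z ⟶ Y} (hfg : ET.IsConflation g f) :
    IsDefect ET (pointwiseCokernel (preadditiveYoneda.map f)) :=
  ⟨Z, Y, X, g, f, hfg, pointwiseCokernel.π _, pointwiseCokernel.π_app_surjective _,
    fun W h => pointwiseCokernel.π_app_eq_zero_iff (preadditiveYoneda.map f) (op W) h⟩

end Defect

theorem sends_deflations_to_mono_iff_hom_defect_zero_general
    {C : Type u} [Category.{v} C] [Preadditive C] [HasZeroObject C]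
    [HasBinaryBiproducts C] (ET : Extriangulated C)
    (F : Mod C) (hF : IsFinitelyPresented F) :
    (∀ ⦃Y X : C⦄ (f : Y ⟶ X), ET.IsDeflation f → Function.Injective (F.map f.op)) ↔
    (∀ S : Mod C, IsDefect ET S → ∀ α : S ⟶ F, α = 0) := by
  constructor
  · rintro hmono S ⟨Z, Y, X, g, f, hfg, p, hp, hker⟩
    exact hom_eq_zero_of_map_injective f p hp ((hker Y f).2 ⟨𝟙 Y, Category.id_comp f⟩)
      (hmono f ⟨Z, g, hfg⟩)
  · rintro hzero Y X f ⟨Z, g, hfg⟩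
    have := hF.additive
    exact map_injective_of_forall_hom_eq_zero f (hzero _ (isDefect_pointwiseCokernel f hfg))

/-- A finitely presented functor `F` over an extriangulated category with
weak kernels sends all deflations to monomorphisms if and only if
`Hom(S, F) = 0` for every defect `S`. -/
theorem sends_deflations_to_mono_iff_hom_defect_zero
    {C : Type u} [Category.{v} C] [Preadditive C] [HasZeroObject C]
    [HasBinaryBiproducts C] (ET : Extriangulated C) (hwk : HasWeakKernels C)
    (F : Mod C) (hF : IsFinitelyPresented F) :
    (∀ ⦃Y X : C⦄ (f : Y ⟶ X), ET.IsDeflation f → Function.Injective (F.map f.op)) ↔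
    (∀ S : Mod C, IsDefect ET S → ∀ α : S ⟶ F, α = 0) :=
  sends_deflations_to_mono_iff_hom_defect_zero_general ET F hF

end PaperStmt

end
end

section
/- For any abelian category A, the Yoneda embedding Y : A → mod A admits an exact left adjoint Q, and def A → mod A → A is a localization sequence: Q is exact, Y is fully faithful right adjoint to Q, and Ker Q = def A, the subcategory of Auslander's defects. -/
/-!
A finitely presented functor `F = coker (Hom(-,Y) ⟶ Hom(-,X))` induced by `f : Y ⟶ X` has, by
Yoneda, `Hom(F, Hom(-,Z)) = {g : X ⟶ Z | f ≫ g = 0} = Hom(coker f, Z)`; so `Q F := coker f` is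
left adjoint to the Yoneda embedding, hence right exact. Since `A` has (weak) kernels, `mod A` is
closed under kernels, cokernels and finite products in the abelian category of all modules, so
it is abelian, and `Q` is exact as soon as it preserves monomorphisms, which is a diagram chase
up to refinements. Finally `Q F = 0` iff `f` is epi iff `F` is the defect of
`0 ⟶ ker f ⟶ Y ⟶ X ⟶ 0`.
-/

open CategoryTheory CategoryTheory.Limits Opposite

universe w' w v u

noncomputable section

namespace PaperStmt

variable {C : Type u} [Category.{v} C] [Preadditive C]

theorem representable_fp {C : Type u} [Category.{v} C] [Preadditive C] (X : C) :
    IsFinitelyPresented (preadditiveYoneda.obj X) := by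
  refine ⟨X, X, 0, 𝟙 _, fun W => fun y => ⟨y, rfl⟩, fun W h => ?_⟩
  constructor
  · intro h0
    exact ⟨0, by rw [zero_comp]; exact h0.symm⟩
  · rintro ⟨k, rfl⟩
    simp
    rfl

/-- The category `mod C` of finitely presented `C`-modules. -/
abbrev ModFP (C : Type u) [Category.{v} C] [Preadditive C] :=
  ObjectProperty.FullSubcategory (IsFinitelyPresented (C := C))

/-- The Yoneda embedding of `C` into `mod C`. -/
def yonedaFP (C : Type u) [Category.{v} C] [Preadditive C] : C ⥤ ModFP C :=
  ObjectProperty.lift _ preadditiveYoneda representable_fp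

/-- A functor `F` over an abelian category `A` is the defect of a short
exact sequence `0 ⟶ X ⟶ Y ⟶ Z ⟶ 0`, i.e. the cokernel of
`Hom(-,Y) ⟶ Hom(-,Z)`. -/
def IsDefectAb {A : Type u} [Category.{v} A] [Abelian A] (F : Mod A) : Prop :=
  ∃ (X Y Z : A) (i : X ⟶ Y) (p : Y ⟶ Z) (w : i ≫ p = 0),
    (ShortComplex.mk i p w).ShortExact ∧
    ∃ q : preadditiveYoneda.obj Z ⟶ F,
      (∀ W : Aᵒᵖ, Function.Surjective (q.app W)) ∧
      (∀ (W : A) (h : W ⟶ Z), q.app (op W) h = 0 ↔ ∃ k : W ⟶ Y, k ≫ p = h)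

instance : (preadditiveYoneda : C ⥤ Mod C).Additive where
  map_add := by intros; ext; exact Preadditive.comp_add _ _ _ _ _ _

lemma hom_ext_preadditiveYoneda {X : C} {G : Mod C} {φ ψ : preadditiveYoneda.obj X ⟶ G}
    (h : φ.app (op X) (𝟙 X) = ψ.app (op X) (𝟙 X)) : φ = ψ := by
  ext W x
  change W.unop ⟶ X at x
  have hφ := NatTrans.naturality_apply φ x.op (𝟙 X)
  have hψ := NatTrans.naturality_apply ψ x.op (𝟙 X)
  have e : ((preadditiveYoneda.obj X).map x.op) (𝟙 X) = x := Category.comp_id x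
  erw [e] at hφ hψ
  erw [hφ, hψ, h]

structure Presentation (F : Mod C) where
  Y : C
  X : C
  f : Y ⟶ X
  p : preadditiveYoneda.obj X ⟶ F
  surjective_app : ∀ W : Cᵒᵖ, Function.Surjective (p.app W)
  app_eq_zero_iff : ∀ (W : C) (h : W ⟶ X), p.app (op W) h = 0 ↔ ∃ k : W ⟶ Y, k ≫ f = h

lemma isFinitelyPresented_iff_nonempty_presentation {F : Mod C} :
    IsFinitelyPresented F ↔ Nonempty (Presentation F) :=
  ⟨fun ⟨Y, X, f, p, hs, hk⟩ => ⟨⟨Y, X, f, p, hs, hk⟩⟩,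
    fun ⟨P⟩ => ⟨P.Y, P.X, P.f, P.p, P.surjective_app, P.app_eq_zero_iff⟩⟩

def IsFinitelyPresented.presentation {F : Mod C} (hF : IsFinitelyPresented F) :
    Presentation F :=
  (isFinitelyPresented_iff_nonempty_presentation.1 hF).some

namespace Presentation

variable {F : Mod C} (P : Presentation F)

section Elements

variable {W : C}

/-- Stating lemmas with `elem` rather than `p.app` keeps `h` typed as a morphism of `C`, not as
an element of `Hom(-, X)(W)`, which `rw` would otherwise fail to match. -/
def elem (h : W ⟶ P.X) : F.obj (op W) := P.p.app (op W) h

lemma exists_elem_eq (x : F.obj (op W)) : ∃ h : W ⟶ P.X, P.elem h = x :=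
  P.surjective_app _ x

lemma elem_eq_zero_iff (h : W ⟶ P.X) : P.elem h = 0 ↔ ∃ k : W ⟶ P.Y, k ≫ P.f = h :=
  P.app_eq_zero_iff W h

lemma elem_comp_f (k : W ⟶ P.Y) : P.elem (k ≫ P.f) = 0 :=
  (P.elem_eq_zero_iff _).2 ⟨k, rfl⟩

lemma elem_add (h h' : W ⟶ P.X) : P.elem (h + h') = P.elem h + P.elem h' :=
  map_add (P.p.app (op W)).hom h h'

lemma elem_sub (h h' : W ⟶ P.X) : P.elem (h - h') = P.elem h - P.elem h' :=
  map_sub (P.p.app (op W)).hom h h'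

lemma exists_lift {G : Mod C} (P' : Presentation G) (τ : F ⟶ G) :
    ∃ a : P.X ⟶ P'.X, preadditiveYoneda.map a ≫ P'.p = P.p ≫ τ := by
  obtain ⟨a, ha⟩ := P'.exists_elem_eq (τ.app _ (P.elem (𝟙 P.X)))
  exact ⟨a, hom_ext_preadditiveYoneda ((congrArg P'.elem (Category.id_comp a)).trans ha)⟩

variable {P} in
lemma elem_comp_of_lift {G : Mod C} {P' : Presentation G} {τ : F ⟶ G} {a : P.X ⟶ P'.X}
    (ha : preadditiveYoneda.map a ≫ P'.p = P.p ≫ τ) (m : W ⟶ P.X) :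
    P'.elem (m ≫ a) = τ.app _ (P.elem m) :=
  ConcreteCategory.congr_hom (congr_app ha (op W)) m

end Elements

lemma map_f_comp_p : preadditiveYoneda.map P.f ≫ P.p = 0 := by
  ext W h
  exact P.elem_comp_f h

def isColimit : IsColimit (CokernelCofork.ofπ P.p P.map_f_comp_p) :=
  evaluationJointlyReflectsColimits _ fun W =>
    have : Epi (P.p.app W) := (AddCommGrpCat.epi_iff_surjective _).2 (P.surjective_app W)
    have hexact : (ShortComplex.mk _ _ (congr_app P.map_f_comp_p W)).Exact :=
      (ShortComplex.ab_exact_iff _).2 fun _ hh => (P.app_eq_zero_iff _ _).1 hh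
    (CokernelCofork.isColimitMapCoconeEquiv _ _).symm hexact.gIsCokernel

def homEquiv (Z : C) : (F ⟶ preadditiveYoneda.obj Z) ≃ {g : P.X ⟶ Z // P.f ≫ g = 0} :=
  (Cofork.IsColimit.homIso P.isColimit _).trans <|
    (Functor.FullyFaithful.ofFullyFaithful preadditiveYoneda).homEquiv.symm.subtypeEquiv
      fun φ => by
        obtain ⟨g, rfl⟩ := preadditiveYoneda.map_surjective φ
        simp [← Functor.map_comp, Functor.map_eq_zero_iff]

lemma map_homEquiv {Z : C} (τ : F ⟶ preadditiveYoneda.obj Z) :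
    preadditiveYoneda.map (P.homEquiv Z τ).1 = P.p ≫ τ :=
  (Functor.FullyFaithful.ofFullyFaithful preadditiveYoneda).map_preimage _

def ofIso {G : Mod C} (e : F ≅ G) : Presentation G where
  Y := P.Y
  X := P.X
  f := P.f
  p := P.p ≫ e.hom
  surjective_app W :=
    ((AddCommGrpCat.epi_iff_surjective (e.hom.app W)).1 inferInstance).comp (P.surjective_app W)
  app_eq_zero_iff W h :=
    (map_eq_zero_iff _ ((AddCommGrpCat.mono_iff_injective (e.hom.app (op W))).1
      inferInstance)).trans (P.app_eq_zero_iff W h)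

end Presentation

section Pointwise

variable {F G : Mod C} {τ : F ⟶ G}

lemma injective_app_of_isLimit {c : KernelFork τ} (hc : IsLimit c) (W : Cᵒᵖ) :
    Function.Injective (c.ι.app W) := by
  have := Fork.IsLimit.mono hc
  rw [← AddCommGrpCat.mono_iff_injective]
  exact (NatTrans.mono_iff_mono_app _).1 this W

lemma surjective_app_of_isColimit {c : CokernelCofork τ} (hc : IsColimit c) (W : Cᵒᵖ) :
    Function.Surjective (c.π.app W) := by
  have := Cofork.IsColimit.epi hc
  rw [← AddCommGrpCat.epi_iff_surjective]
  exact (NatTrans.epi_iff_epi_app _).1 this W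

lemma exists_app_eq_of_isColimit {c : CokernelCofork τ} (hc : IsColimit c) {W : Cᵒᵖ}
    {x : G.obj W} (hx : c.π.app W x = 0) : ∃ y, τ.app W y = x :=
  (ShortComplex.ab_exact_iff _).1
    ((ShortComplex.exact_of_g_is_cokernel (ShortComplex.mk _ _ c.condition)
      (hc.ofIsoColimit (Cofork.isoCoforkOfπ c))).map ((evaluation _ _).obj W)) x hx

lemma biprod_ext_apply {W : Cᵒᵖ} {x y : (F ⊞ G).obj W}
    (h₁ : (biprod.fst : F ⊞ G ⟶ F).app W x = (biprod.fst : F ⊞ G ⟶ F).app W y)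
    (h₂ : (biprod.snd : F ⊞ G ⟶ G).app W x = (biprod.snd : F ⊞ G ⟶ G).app W y) : x = y := by
  have total : ∀ z : (F ⊞ G).obj W,
      (biprod.inl : F ⟶ F ⊞ G).app W ((biprod.fst : F ⊞ G ⟶ F).app W z) +
        (biprod.inr : G ⟶ F ⊞ G).app W ((biprod.snd : F ⊞ G ⟶ G).app W z) = z :=
    ConcreteCategory.congr_hom (congr_app (biprod.total (X := F) (Y := G)) W)
  rw [← total x, ← total y, h₁, h₂]

end Pointwise

lemma hasWeakKernels_of_hasKernels [HasKernels C] : HasWeakKernels C :=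
  fun _ _ f => ⟨kernel f, kernel.ι f, kernel.condition f,
    fun _ h hh => ⟨kernel.lift f h hh, kernel.lift_ι f h hh⟩⟩

lemma HasWeakKernels.exists_weakPullback (hC : HasWeakKernels C) [HasBinaryBiproducts C]
    {X Y Z : C} (f : X ⟶ Z) (g : Y ⟶ Z) :
    ∃ (P : C) (u : P ⟶ X) (v : P ⟶ Y), u ≫ f = v ≫ g ∧
      ∀ ⦃W : C⦄ (h : W ⟶ X) (k : W ⟶ Y), h ≫ f = k ≫ g →
        ∃ t : W ⟶ P, t ≫ u = h ∧ t ≫ v = k := by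
  obtain ⟨P, ι, hι, hP⟩ := hC (biprod.desc f (-g))
  refine ⟨P, ι ≫ biprod.fst, ι ≫ biprod.snd, ?_, fun W h k hhk => ?_⟩
  · rw [biprod.desc_eq, Preadditive.comp_add] at hι
    simpa [add_neg_eq_zero] using hι
  · obtain ⟨t, ht⟩ := hP (biprod.lift h k) (by simp [hhk])
    exact ⟨t, by simp [← Category.assoc, ht], by simp [← Category.assoc, ht]⟩

/-- The cokernel of `τ : F ⟶ G` is presented by `X_G`, with relations coming from `Y_G` and,
through a lift `a : X_F ⟶ X_G` of `τ`, from `X_F`. -/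
lemma isFinitelyPresented_of_isColimit_cokernelCofork [HasBinaryBiproducts C] {F G : Mod C}
    {τ : F ⟶ G} (hF : IsFinitelyPresented F) (hG : IsFinitelyPresented G)
    {c : CokernelCofork τ} (hc : IsColimit c) : IsFinitelyPresented c.pt := by
  let P := hF.presentation
  let P' := hG.presentation
  obtain ⟨a, ha⟩ := P.exists_lift P' τ
  refine ⟨P'.Y ⊞ P.X, P'.X, biprod.desc P'.f a, P'.p ≫ c.π,
    fun W => (surjective_app_of_isColimit hc W).comp (P'.surjective_app W), fun W h => ?_⟩
  change c.π.app _ (P'.elem h) = 0 ↔ _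
  constructor
  · intro hh
    obtain ⟨x, hx⟩ := exists_app_eq_of_isColimit hc hh
    obtain ⟨m, rfl⟩ := P.exists_elem_eq x
    obtain ⟨k, hk⟩ := (P'.elem_eq_zero_iff (h - m ≫ a)).1 (by
      rw [P'.elem_sub, Presentation.elem_comp_of_lift ha, hx, sub_self])
    exact ⟨biprod.lift k m, by simp [hk]⟩
  · rintro ⟨k, rfl⟩
    rw [biprod.desc_eq, Preadditive.comp_add, ← Category.assoc, ← Category.assoc, P'.elem_add,
      P'.elem_comp_f, Presentation.elem_comp_of_lift ha, zero_add]
    exact ConcreteCategory.congr_hom (congr_app c.condition (op W)) _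

/-- `elem m` lies in the kernel of `τ` iff `m ≫ a = k ≫ f_G` for some `k`, so the kernel is
generated by a weak pullback `K₁` of `a` and `f_G`; its relations, the `t : W ⟶ K₁` with
`t ≫ u₁` factoring through `f_F`, are generated by a weak pullback `K₂` of `u₁` and `f_F`. -/
lemma isFinitelyPresented_of_isLimit_kernelFork (hC : HasWeakKernels C) [HasBinaryBiproducts C]
    {F G : Mod C} {τ : F ⟶ G} (hF : IsFinitelyPresented F) (hG : IsFinitelyPresented G)
    {c : KernelFork τ} (hc : IsLimit c) : IsFinitelyPresented c.pt := by
  let P := hF.presentation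
  let P' := hG.presentation
  obtain ⟨a, ha⟩ := P.exists_lift P' τ
  obtain ⟨K₁, u₁, v₁, w₁, h₁⟩ := hC.exists_weakPullback a P'.f
  obtain ⟨K₂, u₂, v₂, w₂, h₂⟩ := hC.exists_weakPullback u₁ P.f
  obtain ⟨p, hp⟩ := KernelFork.IsLimit.lift' hc (preadditiveYoneda.map u₁ ≫ P.p) (by
    rw [Category.assoc, ← ha, ← Category.assoc, ← Functor.map_comp, w₁, Functor.map_comp,
      Category.assoc, P'.map_f_comp_p, comp_zero])
  have hp' : ∀ {W : C} (h : W ⟶ K₁), c.ι.app (op W) (p.app (op W) h) = P.elem (h ≫ u₁) :=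
    fun h => ConcreteCategory.congr_hom (congr_app hp _) h
  refine ⟨K₂, K₁, u₂, p, fun W x => ?_, fun W h => ?_⟩
  · obtain ⟨m, hm⟩ := P.exists_elem_eq (W := W.unop) (c.ι.app W x)
    have hτ : P'.elem (m ≫ a) = 0 := by
      rw [Presentation.elem_comp_of_lift ha, hm]
      exact ConcreteCategory.congr_hom (congr_app c.condition W) x
    obtain ⟨k, hk⟩ := (P'.elem_eq_zero_iff _).1 hτ
    obtain ⟨t, ht, -⟩ := h₁ m k hk.symm
    exact ⟨t, injective_app_of_isLimit hc W (by rw [hp', ht, hm])⟩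
  · rw [← map_eq_zero_iff _ (injective_app_of_isLimit hc _), hp', P.elem_eq_zero_iff]
    constructor
    · rintro ⟨m, hm⟩
      obtain ⟨t, ht, -⟩ := h₂ h m hm.symm
      exact ⟨t, ht⟩
    · rintro ⟨t, rfl⟩
      exact ⟨t ≫ v₂, by rw [Category.assoc, ← w₂, Category.assoc]⟩

lemma isFinitelyPresented_biprod [HasBinaryBiproducts C] {F G : Mod C}
    (hF : IsFinitelyPresented F) (hG : IsFinitelyPresented G) : IsFinitelyPresented (F ⊞ G) := by
  let P := hF.presentation
  let P' := hG.presentation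
  let p := biprod.lift (preadditiveYoneda.map biprod.fst ≫ P.p)
    (preadditiveYoneda.map biprod.snd ≫ P'.p)
  have fst_p : ∀ {W : C} (h : W ⟶ P.X ⊞ P'.X),
      (biprod.fst : F ⊞ G ⟶ F).app _ (p.app _ h) = P.elem (h ≫ biprod.fst) :=
    fun h => ConcreteCategory.congr_hom (congr_app (biprod.lift_fst (preadditiveYoneda.map
      biprod.fst ≫ P.p) (preadditiveYoneda.map biprod.snd ≫ P'.p)) _) h
  have snd_p : ∀ {W : C} (h : W ⟶ P.X ⊞ P'.X),
      (biprod.snd : F ⊞ G ⟶ G).app _ (p.app _ h) = P'.elem (h ≫ biprod.snd) :=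
    fun h => ConcreteCategory.congr_hom (congr_app (biprod.lift_snd (preadditiveYoneda.map
      biprod.fst ≫ P.p) (preadditiveYoneda.map biprod.snd ≫ P'.p)) _) h
  refine ⟨P.Y ⊞ P'.Y, P.X ⊞ P'.X, biprod.map P.f P'.f, p, fun W x => ?_, fun W h => ?_⟩
  · obtain ⟨h₁, hh₁⟩ := P.exists_elem_eq (W := W.unop) ((biprod.fst : F ⊞ G ⟶ F).app W x)
    obtain ⟨h₂, hh₂⟩ := P'.exists_elem_eq (W := W.unop) ((biprod.snd : F ⊞ G ⟶ G).app W x)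
    exact ⟨biprod.lift h₁ h₂, biprod_ext_apply (by rw [fst_p, biprod.lift_fst, hh₁])
      (by rw [snd_p, biprod.lift_snd, hh₂])⟩
  · constructor
    · intro hh
      obtain ⟨k₁, hk₁⟩ := (P.elem_eq_zero_iff _).1 ((fst_p h).symm.trans (by rw [hh, map_zero]))
      obtain ⟨k₂, hk₂⟩ := (P'.elem_eq_zero_iff _).1 ((snd_p h).symm.trans (by rw [hh, map_zero]))
      exact ⟨biprod.lift k₁ k₂, by ext <;> simp [hk₁, hk₂]⟩
    · rintro ⟨k, rfl⟩
      refine biprod_ext_apply ?_ ?_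
      · rw [fst_p, map_zero, Category.assoc, biprod.map_fst, ← Category.assoc, P.elem_comp_f]
      · rw [snd_p, map_zero, Category.assoc, biprod.map_snd, ← Category.assoc, P'.elem_comp_f]

instance : ObjectProperty.IsClosedUnderIsomorphisms (IsFinitelyPresented (C := C)) where
  of_iso e hF := isFinitelyPresented_iff_nonempty_presentation.2 ⟨hF.presentation.ofIso e⟩

open ZeroObject in
instance [HasZeroObject C] : ObjectProperty.ContainsZero (IsFinitelyPresented (C := C)) where
  exists_zero := ⟨_, preadditiveYoneda.map_isZero (isZero_zero C), representable_fp 0⟩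

instance [HasBinaryBiproducts C] :
    ObjectProperty.IsClosedUnderBinaryProducts (IsFinitelyPresented (C := C)) :=
  ObjectProperty.IsClosedUnderLimitsOfShape.mk' (by
    rintro _ ⟨F, hF⟩
    exact ObjectProperty.prop_of_iso _
      ((biprod.isoProd _ _).trans (HasLimit.isoOfNatIso (diagramIsoPair F)).symm)
      (isFinitelyPresented_biprod (hF _) (hF _)))

instance [HasZeroObject C] [HasBinaryBiproducts C] :
    ObjectProperty.IsClosedUnderFiniteProducts (IsFinitelyPresented (C := C)) :=
  .mk'

instance [HasBinaryBiproducts C] :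
    ObjectProperty.IsClosedUnderCokernels (IsFinitelyPresented (C := C)) where
  cokernels_le := by
    rintro _ ⟨_, _, hc, hF, hG⟩
    exact isFinitelyPresented_of_isColimit_cokernelCofork hF hG hc

instance [HasKernels C] [HasBinaryBiproducts C] :
    ObjectProperty.IsClosedUnderKernels (IsFinitelyPresented (C := C)) where
  kernels_le := by
    rintro _ ⟨_, _, hc, hF, hG⟩
    exact isFinitelyPresented_of_isLimit_kernelFork hasWeakKernels_of_hasKernels hF hG hc

instance : (yonedaFP C).Full :=
  inferInstanceAs (ObjectProperty.lift _ _ _).Full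

instance : (yonedaFP C).Faithful :=
  inferInstanceAs (ObjectProperty.lift _ _ _).Faithful

def cokernelDescEquiv {X Y : C} (f : Y ⟶ X) [HasCokernel f] (Z : C) :
    (cokernel f ⟶ Z) ≃ {g : X ⟶ Z // f ≫ g = 0} where
  toFun c := ⟨cokernel.π f ≫ c, by simp⟩
  invFun g := cokernel.desc f g.1 g.2
  left_inv c := by ext; simp
  right_inv g := by ext; simp

lemma isZero_iff_forall_subsingleton {X : C} : IsZero X ↔ ∀ Z : C, Subsingleton (X ⟶ Z) :=
  ⟨fun h _ => ⟨h.eq_of_src⟩, fun h => (IsZero.iff_id_eq_zero X).2 ((h X).elim _ _)⟩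

lemma epi_iff_forall_subsingleton {X Y : C} (f : Y ⟶ X) :
    Epi f ↔ ∀ Z : C, Subsingleton {g : X ⟶ Z // f ≫ g = 0} := by
  refine ⟨fun _ _ => ⟨fun g g' => Subtype.ext ((cancel_epi f).1 (g.2.trans g'.2.symm))⟩,
    fun h => Preadditive.epi_of_cancel_zero _ fun g hg => ?_⟩
  exact congrArg Subtype.val (Subsingleton.elim (α := {g // f ≫ g = 0}) ⟨g, hg⟩ ⟨0, comp_zero⟩)

section LeftAdjoint

variable [HasCokernels C]

def presentation (F : ModFP C) : Presentation F.obj := F.property.presentation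

variable (C) in
def yonedaFPHomEquiv (F : ModFP C) (Z : C) :
    (cokernel (presentation F).f ⟶ Z) ≃ (F ⟶ (yonedaFP C).obj Z) :=
  (cokernelDescEquiv _ Z).trans (((presentation F).homEquiv Z).symm.trans
    ((ObjectProperty.fullyFaithfulι _).homEquiv (X := F) (Y := (yonedaFP C).obj Z)).symm)

lemma map_π_comp_yonedaFPHomEquiv_symm {F : ModFP C} {Z : C} (τ : F ⟶ (yonedaFP C).obj Z) :
    preadditiveYoneda.map (cokernel.π _ ≫ (yonedaFPHomEquiv C F Z).symm τ) =
      (presentation F).p ≫ τ.hom :=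
  (congrArg preadditiveYoneda.map (cokernel.π_desc _ _ _)).trans
    ((presentation F).map_homEquiv τ.hom)

lemma p_comp_yonedaFPHomEquiv {F : ModFP C} {Z : C} (c : cokernel (presentation F).f ⟶ Z) :
    (presentation F).p ≫ (yonedaFPHomEquiv C F Z c).hom =
      preadditiveYoneda.map (cokernel.π _ ≫ c) := by
  have h := map_π_comp_yonedaFPHomEquiv_symm (yonedaFPHomEquiv C F Z c)
  rw [Equiv.symm_apply_apply] at h
  exact h.symm

lemma yonedaFPHomEquiv_symm_eq {F : ModFP C} {Z : C} {τ : F ⟶ (yonedaFP C).obj Z}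
    {c : cokernel (presentation F).f ⟶ Z}
    (h : preadditiveYoneda.map (cokernel.π _ ≫ c) = (presentation F).p ≫ τ.hom) :
    (yonedaFPHomEquiv C F Z).symm τ = c :=
  (cancel_epi (cokernel.π _)).1 <| preadditiveYoneda.map_injective <|
    (map_π_comp_yonedaFPHomEquiv_symm τ).trans h.symm

lemma yonedaFPHomEquiv_comp {F : ModFP C} {Z Z' : C} (g : Z ⟶ Z')
    (c : cokernel (presentation F).f ⟶ Z) :
    yonedaFPHomEquiv C F Z' (c ≫ g) = yonedaFPHomEquiv C F Z c ≫ (yonedaFP C).map g := by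
  refine ((yonedaFPHomEquiv C F Z').eq_symm_apply).1 (yonedaFPHomEquiv_symm_eq ?_).symm
  rw [← Category.assoc, Functor.map_comp, ← p_comp_yonedaFPHomEquiv]
  rfl

variable (C) in
def yonedaFPLeftAdjoint : ModFP C ⥤ C :=
  Adjunction.leftAdjointOfEquiv (yonedaFPHomEquiv C) fun _ _ _ => yonedaFPHomEquiv_comp

variable (C) in
def yonedaFPAdjunction : yonedaFPLeftAdjoint C ⊣ yonedaFP C :=
  Adjunction.adjunctionOfEquivLeft _ _

instance : (yonedaFPLeftAdjoint C).IsLeftAdjoint := ⟨_, ⟨yonedaFPAdjunction C⟩⟩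

lemma π_comp_yonedaFPLeftAdjoint_map {F G : ModFP C} (τ : F ⟶ G)
    {a : (presentation F).X ⟶ (presentation G).X}
    (ha : preadditiveYoneda.map a ≫ (presentation G).p = (presentation F).p ≫ τ.hom) :
    cokernel.π _ ≫ (yonedaFPLeftAdjoint C).map τ = a ≫ cokernel.π _ := by
  apply preadditiveYoneda.map_injective
  have hmap : (yonedaFPLeftAdjoint C).map τ = (yonedaFPHomEquiv C F _).symm
      (τ ≫ yonedaFPHomEquiv C G _ (𝟙 _)) := Adjunction.leftAdjointOfEquiv_map _ _ _
  refine ((congrArg (fun c => preadditiveYoneda.map (cokernel.π _ ≫ c)) hmap).trans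
    (map_π_comp_yonedaFPHomEquiv_symm _)).trans ?_
  change (presentation F).p ≫ τ.hom ≫ (yonedaFPHomEquiv C G _ (𝟙 _)).hom = _
  rw [← Category.assoc, ← ha, Category.assoc, p_comp_yonedaFPHomEquiv, Category.comp_id]
  exact (Functor.map_comp _ _ _).symm

end LeftAdjoint

section Abelian

variable {A : Type u} [Category.{v} A] [Abelian A]

/-- Up to refinement, a morphism into `cokernel P.f` killed by `q` lifts to `x` with `x ≫ a` a
relation of `G`; injectivity of `τ` makes `x` a relation of `F`. -/
lemma Presentation.mono_of_π_comp {F G : Mod A} {P : Presentation F} {P' : Presentation G}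
    {τ : F ⟶ G} (hτ : ∀ W, Function.Injective (τ.app W)) {a : P.X ⟶ P'.X}
    (ha : preadditiveYoneda.map a ≫ P'.p = P.p ≫ τ) {q : cokernel P.f ⟶ cokernel P'.f}
    (hq : cokernel.π P.f ≫ q = a ≫ cokernel.π P'.f) : Mono q := by
  refine Preadditive.mono_of_cancel_zero _ fun {T} g hg => ?_
  obtain ⟨T₁, e₁, _, x, hx⟩ := surjective_up_to_refinements_of_epi (cokernel.π P.f) g
  have hx' : (x ≫ a) ≫ cokernel.π P'.f = 0 := by
    rw [Category.assoc, ← hq, ← Category.assoc, ← hx, Category.assoc, hg, comp_zero]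
  obtain ⟨T₂, e₂, _, y, hy⟩ := (ShortComplex.exact_of_g_is_cokernel
    (ShortComplex.mk P'.f (cokernel.π P'.f) (cokernel.condition _))
    (cokernelIsCokernel _)).exact_up_to_refinements (x ≫ a) hx'
  have h0 : P.elem (e₂ ≫ x) = 0 := hτ _ (by
    rw [← Presentation.elem_comp_of_lift ha, Category.assoc, hy, P'.elem_comp_f, map_zero])
  obtain ⟨k, hk⟩ := (P.elem_eq_zero_iff _).1 h0
  have h : e₂ ≫ e₁ ≫ g = e₂ ≫ e₁ ≫ 0 := by
    rw [hx, ← Category.assoc, ← hk, Category.assoc, cokernel.condition, comp_zero, comp_zero,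
      comp_zero]
  exact (cancel_epi e₁).1 ((cancel_epi e₂).1 h)

instance : (yonedaFPLeftAdjoint A).PreservesMonomorphisms where
  preserves {F G} τ _ := by
    have hτ : Mono τ.hom := (ObjectProperty.preservesMonomorphisms_ι_of_isNormalEpiCategory
      (IsFinitelyPresented (C := A))).preserves τ
    obtain ⟨a, ha⟩ := (presentation F).exists_lift (presentation G) τ.hom
    exact Presentation.mono_of_π_comp
      (fun W => (AddCommGrpCat.mono_iff_injective _).1 ((NatTrans.mono_iff_mono_app _).1 hτ W))
      ha (π_comp_yonedaFPLeftAdjoint_map τ ha)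

lemma preservesFiniteLimits_yonedaFPLeftAdjoint :
    PreservesFiniteLimits (yonedaFPLeftAdjoint A) := by
  have := preservesBinaryBiproducts_of_preservesBinaryCoproducts (yonedaFPLeftAdjoint A)
  have := Functor.additive_of_preservesBinaryBiproducts (yonedaFPLeftAdjoint A)
  have := Functor.preservesHomology_of_preservesMonos_and_cokernels (yonedaFPLeftAdjoint A)
  exact Functor.preservesFiniteLimits_of_preservesHomology _

lemma Presentation.isZero_yonedaFPLeftAdjoint_obj_iff {F : ModFP A} (P : Presentation F.obj) :
    IsZero ((yonedaFPLeftAdjoint A).obj F) ↔ Epi P.f := by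
  rw [isZero_iff_forall_subsingleton, epi_iff_forall_subsingleton]
  exact forall_congr' fun Z => ((yonedaFPHomEquiv A F Z).trans
    (((ObjectProperty.fullyFaithfulι _).homEquiv).trans (P.homEquiv Z))).subsingleton_congr

lemma isDefectAb_iff_exists_presentation_epi {F : Mod A} :
    IsDefectAb F ↔ ∃ P : Presentation F, Epi P.f := by
  constructor
  · rintro ⟨X, Y, Z, i, p, w, hs, q, hq, hk⟩
    exact ⟨⟨Y, Z, p, q, hq, hk⟩, hs.epi_g⟩
  · rintro ⟨P, hP⟩
    exact ⟨kernel P.f, P.Y, P.X, kernel.ι _, P.f, kernel.condition _,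
      { exact := ShortComplex.exact_of_f_is_kernel _ (kernelIsKernel _) }, P.p, P.surjective_app,
      P.app_eq_zero_iff⟩

end Abelian

/-- **Auslander's formula.**  For an abelian category `A`, the Yoneda
embedding `A ⥤ mod A` admits an exact left adjoint `Q`, giving a
localization sequence `def A → mod A → A`:  `Q` is exact, the Yoneda
embedding is a fully faithful right adjoint of `Q`, and `Ker Q = def A`. -/
theorem auslander_formula (A : Type u) [Category.{v} A] [Abelian A] :
    (yonedaFP A).Full ∧ (yonedaFP A).Faithful ∧
    ∃ Q : ModFP A ⥤ A, Nonempty (Q ⊣ yonedaFP A) ∧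
      Nonempty (PreservesFiniteLimits Q) ∧ Nonempty (PreservesFiniteColimits Q) ∧
      ∀ F : ModFP A, IsZero (Q.obj F) ↔ IsDefectAb F.obj := by
  refine ⟨inferInstance, inferInstance, yonedaFPLeftAdjoint A, ⟨yonedaFPAdjunction A⟩,
    ⟨preservesFiniteLimits_yonedaFPLeftAdjoint⟩, ⟨inferInstance⟩, fun F => ?_⟩
  rw [isDefectAb_iff_exists_presentation_epi]
  exact ⟨fun h => ⟨presentation F, (presentation F).isZero_yonedaFPLeftAdjoint_obj_iff.1 h⟩,
    fun ⟨P, hP⟩ => P.isZero_yonedaFPLeftAdjoint_obj_iff.2 hP⟩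

end PaperStmt

end
end
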